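/- arXiv:1811.01491 — 7 statements merged into one kernel-verified Lean document; each statement's English description precedes it below -/
import Mathlib

section
/- Let H be a hypergraph on n vertices with n edges and incidence matrix M, let t > 0, and suppose ‖Mv‖ ≤ C·√t·‖v‖ for every v ∈ ℝ^n with ∑_i v_i = 0. Then for every subset S of the vertices with |S| = αn (0 < α ≤ 1) and every real K > 0, the number of edges e with |e ∩ S| > α·|e| + K·α·t is at most C²·n / (K²·α·t). In particular, there is a set E' of at most C²·n/(K²·α·t) edges such that every edge e ∉ E' satisfies |e ∩ S| ≤ α·|e| + K·α·t. -/
open scoped Classical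
open Finset

/-- Deterministic pseudorandomness lemma: if the incidence matrix of a hypergraph on `n`
vertices with `n` edges (edge `e` is the finset `E e`) has small norm on mean-zero vectors,
then for every vertex subset `S` of size `αn`, few edges intersect `S` much more than
proportionally. -/
theorem few_unbalanced_edges (n : ℕ) (E : Fin n → Finset (Fin n)) (t C K α : ℝ)
    (ht : 0 < t) (hK : 0 < K) (hα : 0 < α) (hα1 : α ≤ 1)
    (hnorm : ∀ x : Fin n → ℝ, (∑ i, x i) = 0 →
      Real.sqrt (∑ e : Fin n, (∑ i ∈ E e, x i) ^ 2) ≤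
        C * Real.sqrt t * Real.sqrt (∑ i, x i ^ 2))
    (S : Finset (Fin n)) (hS : (S.card : ℝ) = α * n) :
    (((Finset.univ.filter (fun e : Fin n =>
        α * ((E e).card : ℝ) + K * α * t < (((E e) ∩ S).card : ℝ))).card : ℝ) ≤
      C ^ 2 * n / (K ^ 2 * α * t)) ∧
    ∃ E' : Finset (Fin n), (E'.card : ℝ) ≤ C ^ 2 * n / (K ^ 2 * α * t) ∧
      ∀ e ∉ E', (((E e) ∩ S).card : ℝ) ≤ α * ((E e).card : ℝ) + K * α * t := by
  set x : Fin n → ℝ := fun i => (if i ∈ S then 1 else 0) - α with hx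
  have hsum0 : (∑ i, x i) = 0 := by
    simp only [hx, Finset.sum_sub_distrib, Finset.sum_ite_mem, Finset.univ_inter,
      Finset.sum_const, Finset.sum_const, nsmul_eq_mul, mul_one, Finset.card_univ,
      Fintype.card_fin]
    rw [hS]; ring
  have hsq : (∑ i, x i ^ 2) = α * (1 - α) * n := by
    have h1 : ∀ i : Fin n, x i ^ 2 = (if i ∈ S then ((1:ℝ) - α) ^ 2 - α ^ 2 else 0) + α ^ 2 := by
      intro i; simp only [hx]; split <;> ring
    rw [Finset.sum_congr rfl fun i _ => h1 i, Finset.sum_add_distrib, Finset.sum_ite_mem,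
      Finset.univ_inter, Finset.sum_const, Finset.sum_const, nsmul_eq_mul, nsmul_eq_mul,
      Finset.card_univ, Fintype.card_fin, hS]
    ring
  have hedge : ∀ e : Fin n, (∑ i ∈ E e, x i) = (((E e) ∩ S).card : ℝ) - α * ((E e).card : ℝ) := by
    intro e
    simp only [hx, Finset.sum_sub_distrib, Finset.sum_ite_mem, Finset.sum_const,
      nsmul_eq_mul, mul_one]
    ring
  have hA0 : (0:ℝ) ≤ ∑ e : Fin n, (∑ i ∈ E e, x i) ^ 2 :=
    Finset.sum_nonneg fun e _ => sq_nonneg _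
  have hB0 : (0:ℝ) ≤ α * (1 - α) * n := by
    have : (0:ℝ) ≤ (1 - α) := by linarith
    positivity
  have hmain := hnorm x hsum0
  have hA : (∑ e : Fin n, (∑ i ∈ E e, x i) ^ 2) ≤ C ^ 2 * t * (α * (1 - α) * n) := by
    have hsq2 : (Real.sqrt (∑ e : Fin n, (∑ i ∈ E e, x i) ^ 2)) ^ 2 ≤
        (C * Real.sqrt t * Real.sqrt (∑ i, x i ^ 2)) ^ 2 :=
      pow_le_pow_left₀ (Real.sqrt_nonneg _) hmain 2
    rw [Real.sq_sqrt hA0] at hsq2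
    calc (∑ e : Fin n, (∑ i ∈ E e, x i) ^ 2)
        ≤ (C * Real.sqrt t * Real.sqrt (∑ i, x i ^ 2)) ^ 2 := hsq2
      _ = C ^ 2 * (Real.sqrt t) ^ 2 * (Real.sqrt (∑ i, x i ^ 2)) ^ 2 := by ring
      _ = C ^ 2 * t * (α * (1 - α) * n) := by
          rw [Real.sq_sqrt ht.le, hsq, Real.sq_sqrt hB0]
  set F := Finset.univ.filter (fun e : Fin n =>
      α * ((E e).card : ℝ) + K * α * t < (((E e) ∩ S).card : ℝ)) with hF
  have hcard : (F.card : ℝ) * (K * α * t) ^ 2 ≤ C ^ 2 * t * (α * n) := by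
    have h1 : (F.card : ℝ) * (K * α * t) ^ 2 ≤ ∑ e ∈ F, (∑ i ∈ E e, x i) ^ 2 := by
      have : (F.card : ℝ) * (K * α * t) ^ 2 = ∑ _e ∈ F, (K * α * t) ^ 2 := by
        rw [Finset.sum_const, nsmul_eq_mul]
      rw [this]
      apply Finset.sum_le_sum
      intro e he
      rw [hF, Finset.mem_filter] at he
      have hlt : K * α * t < (∑ i ∈ E e, x i) := by rw [hedge e]; linarith [he.2]
      have hpos : (0:ℝ) ≤ K * α * t := by positivity
      exact pow_le_pow_left₀ hpos hlt.le 2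
    have h2 : ∑ e ∈ F, (∑ i ∈ E e, x i) ^ 2 ≤ ∑ e : Fin n, (∑ i ∈ E e, x i) ^ 2 :=
      Finset.sum_le_sum_of_subset_of_nonneg (Finset.subset_univ _)
        (fun e _ _ => sq_nonneg _)
    have h3 : C ^ 2 * t * (α * (1 - α) * n) ≤ C ^ 2 * t * (α * n) := by
      have hC : (0:ℝ) ≤ C ^ 2 * t * (α * n) := by positivity
      nlinarith [sq_nonneg C, ht.le, hα.le, (Nat.cast_nonneg n : (0:ℝ) ≤ (n:ℝ))]
    linarith
  have hpos : (0:ℝ) < K ^ 2 * α * t := by positivity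
  have hfin : (F.card : ℝ) ≤ C ^ 2 * n / (K ^ 2 * α * t) := by
    rw [le_div_iff₀ hpos]
    have hαt : (0:ℝ) < α * t := mul_pos hα ht
    nlinarith [hcard, hαt]
  refine ⟨hfin, F, hfin, fun e he => ?_⟩
  rw [hF, Finset.mem_filter] at he
  push_neg at he
  exact he (Finset.mem_univ e)
end

section
/- Let m = m(n) and t = t(n) be given, for each n let M be an m×n random 0/1 matrix with independent Bernoulli(1/2) entries, and let E_n denote the event that every row of M has an even number of 1's. If Pr( disc(M) ≤ t(n) | E_n ) tends to 1 as n → ∞, then Pr( disc(M) ≤ t(n) + 1 ) tends to 1 as n → ∞. -/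
open scoped Classical
open Finset Filter

/-- Probability of an event in a finite uniform probability space. -/
noncomputable def pr {Ω : Type*} [Fintype Ω] (p : Ω → Prop) : ℝ :=
  ((Finset.univ.filter p).card : ℝ) / (Fintype.card Ω : ℝ)

/-- `discLE M x` means the discrepancy of the 0/1 matrix `M` is at most `x`, i.e. there
is a `±1` coloring `u` with `‖Mu‖_∞ ≤ x`. -/
def discLE {m n : ℕ} (M : Fin m → Fin n → Bool) (x : ℝ) : Prop :=
  ∃ u : Fin n → ℤ, (∀ i, u i = 1 ∨ u i = -1) ∧
    ∀ e : Fin m, |∑ i, (if M e i then (u i : ℝ) else 0)| ≤ x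

/-- Every row of `M` has an even number of `1`'s. -/
def evenRows {m n : ℕ} (M : Fin m → Fin n → Bool) : Prop :=
  ∀ e : Fin m, Even (Finset.univ.filter (fun i => M e i = true)).card

/-! Overwriting the first column of `M` by the parities of the other entries of each row maps
the uniform matrix onto the uniform even-row matrix, every fibre having `2 ^ m` elements, and
moves every row sum `∑ᵢ Mₑᵢ uᵢ` by at most `1`. Hence
`Pr(disc M ≤ t + 1) ≥ Pr(disc M ≤ t | E)`, and the conclusion follows by squeezing. -/

section Probability

variable {α β : Type*} [Fintype α] [Fintype β]

lemma pr_mono {P Q : α → Prop} (h : ∀ x, P x → Q x) : pr P ≤ pr Q := by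
  unfold pr
  gcongr
  exact h _

lemma pr_le_one [Nonempty α] (P : α → Prop) : pr P ≤ 1 := by
  unfold pr
  rw [div_le_one (by exact_mod_cast Fintype.card_pos)]
  exact_mod_cast (card_filter_le univ P).trans_eq card_univ

lemma card_filter_comp_eq_mul [DecidableEq β] {f : α → β} {E Q : β → Prop} {k : ℕ}
    (hfiber : ∀ y, E y → #{x | f x = y} = k) (hQ : ∀ y, Q y → E y) :
    #{x | Q (f x)} = k * #{y | Q y} := by
  rw [card_eq_sum_card_fiberwise (f := f) (t := {y | Q y}) (fun x hx => by simpa using hx),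
    sum_const_nat fun y hy => ?_, mul_comm]
  rw [mem_filter] at hy
  rw [← hfiber y (hQ y hy.2)]
  congr 1
  ext x
  simp only [mem_filter, mem_univ, true_and, and_iff_right_iff_imp]
  rintro rfl
  exact hy.2

lemma pr_comp_eq_div [DecidableEq β] [Nonempty α] {f : α → β} {E Q : β → Prop} {k : ℕ}
    (hf : ∀ x, E (f x)) (hfiber : ∀ y, E y → #{x | f x = y} = k) (hQ : ∀ y, Q y → E y) :
    pr (fun x => Q (f x)) = pr Q / pr E := by
  have hα : Fintype.card α = k * #{y | E y} := by
    rw [← card_filter_comp_eq_mul hfiber fun _ h => h, filter_true_of_mem fun x _ => hf x,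
      card_univ]
  have hk : (k : ℝ) ≠ 0 := by
    have := (Fintype.card_pos (α := α)).ne'
    rw [hα] at this
    exact_mod_cast left_ne_zero_of_mul this
  have hβ : (Fintype.card β : ℝ) ≠ 0 := by
    have := Fintype.card_pos_iff.mpr ⟨f (Classical.arbitrary α)⟩
    positivity
  unfold pr
  rw [card_filter_comp_eq_mul hfiber hQ, hα]
  push_cast
  field_simp

end Probability

section ParityFix

variable {ι : Type*} [Fintype ι] [DecidableEq ι]

def EvenWeight (r : ι → Bool) : Prop := Even #{i | r i = true}

def parityFix (z : ι) (r : ι → Bool) : ι → Bool :=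
  Function.update r z (decide (Odd #{j ∈ univ.erase z | r j = true}))

lemma card_filter_eq_card_filter_erase_add (z : ι) (r : ι → Bool) :
    #{i | r i = true} = #{j ∈ univ.erase z | r j = true} + if r z = true then 1 else 0 := by
  rw [card_filter, card_filter, ← add_sum_erase _ _ (mem_univ z), add_comm]

lemma card_filter_erase_update (z : ι) (r : ι → Bool) (b : Bool) :
    #{j ∈ univ.erase z | Function.update r z b j = true} = #{j ∈ univ.erase z | r j = true} := by
  congr 1
  refine filter_congr fun j hj => ?_
  rw [Function.update_of_ne (ne_of_mem_erase hj)]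

lemma parityFix_of_ne {z j : ι} (h : j ≠ z) (r : ι → Bool) : parityFix z r j = r j :=
  Function.update_of_ne h _ _

lemma evenWeight_parityFix (z : ι) (r : ι → Bool) : EvenWeight (parityFix z r) := by
  rw [EvenWeight, card_filter_eq_card_filter_erase_add z, parityFix, card_filter_erase_update,
    Function.update_self]
  rcases Nat.even_or_odd #{j ∈ univ.erase z | r j = true} with h | h
  · simp [Nat.not_odd_iff_even.mpr h, h]
  · simp [h, h.add_one]

lemma parityFix_update (z : ι) (r : ι → Bool) (b : Bool) :
    parityFix z (Function.update r z b) = parityFix z r := by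
  rw [parityFix, parityFix, card_filter_erase_update, Function.update_idem]

lemma parityFix_eq_self {r : ι → Bool} (hr : EvenWeight r) (z : ι) : parityFix z r = r := by
  rw [EvenWeight, card_filter_eq_card_filter_erase_add z] at hr
  refine Function.update_eq_iff.mpr ⟨?_, fun _ _ => rfl⟩
  cases hz : r z <;> simp_all [Nat.even_add_one, Nat.not_odd_iff_even]

lemma parityFix_eq_iff {r : ι → Bool} (hr : EvenWeight r) (z : ι) (s : ι → Bool) :
    parityFix z s = r ↔ ∃ b, Function.update r z b = s := by
  constructor
  · rintro rfl
    refine ⟨s z, funext fun j => ?_⟩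
    rcases eq_or_ne j z with rfl | hj
    · simp
    · rw [Function.update_of_ne hj, parityFix_of_ne hj]
  · rintro ⟨b, rfl⟩
    rw [parityFix_update, parityFix_eq_self hr]

lemma card_parityFix_fiber {r : ι → Bool} (hr : EvenWeight r) (z : ι) :
    #{s | parityFix z s = r} = 2 := by
  have : ({s | parityFix z s = r} : Finset (ι → Bool)) = univ.image (Function.update r z) := by
    ext s
    simp only [mem_filter, mem_univ, true_and, parityFix_eq_iff hr, mem_image]
  rw [this, card_image_of_injective _ (Function.update_injective r z)]
  rfl

end ParityFix

section Matrix

variable {m n : ℕ}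

lemma card_comp_parityFix_fiber {N : Fin m → Fin n → Bool} (hN : evenRows N) (z : Fin n) :
    #{M | parityFix z ∘ M = N} = 2 ^ m := by
  have : ({M | parityFix z ∘ M = N} : Finset (Fin m → Fin n → Bool)) =
      Fintype.piFinset fun e => {s | parityFix z s = N e} := by
    ext M
    simp [funext_iff]
  rw [this, Fintype.card_piFinset, prod_congr rfl fun e _ => card_parityFix_fiber (hN e) z]
  simp

lemma discLE.add_one_of_eq_off {M N : Fin m → Fin n → Bool} {x : ℝ} (hN : discLE N x)
    (z : Fin n) (hMN : ∀ e i, i ≠ z → M e i = N e i) : discLE M (x + 1) := by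
  obtain ⟨u, hu, hNu⟩ := hN
  refine ⟨u, hu, fun e => ?_⟩
  have hdiff : ∑ i, (if M e i then (u i : ℝ) else 0) - ∑ i, (if N e i then (u i : ℝ) else 0) =
      (if M e z then (u z : ℝ) else 0) - (if N e z then (u z : ℝ) else 0) := by
    rw [← sum_sub_distrib, sum_eq_single z (fun i _ hi => by rw [hMN e i hi, sub_self])
      (by simp)]
  have hz : |(if M e z then (u z : ℝ) else 0) - (if N e z then (u z : ℝ) else 0)| ≤ 1 := by
    rcases hu z with h | h <;> cases M e z <;> cases N e z <;> simp [h]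
  linarith [hNu e, hdiff ▸ hz, abs_sub_abs_le_abs_sub (∑ i, (if M e i then (u i : ℝ) else 0))
    (∑ i, (if N e i then (u i : ℝ) else 0))]

lemma pr_discLE_and_evenRows_div_le (z : Fin n) (x : ℝ) :
    pr (fun M : Fin m → Fin n → Bool => discLE M x ∧ evenRows M) /
        pr (fun M : Fin m → Fin n → Bool => evenRows M)
      ≤ pr (fun M : Fin m → Fin n → Bool => discLE M (x + 1)) := by
  rw [← pr_comp_eq_div (f := (parityFix z ∘ ·)) (fun M e => evenWeight_parityFix z (M e))
    (fun N hN => card_comp_parityFix_fiber hN z) fun _ h => h.2]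
  exact pr_mono fun M h => h.1.add_one_of_eq_off z fun e i hi => (parityFix_of_ne hi _).symm

end Matrix

theorem even_rows_conditioning (m t : ℕ → ℕ)
    (h : Tendsto (fun n : ℕ =>
        pr (fun M : Fin (m n) → Fin n → Bool => discLE M (t n) ∧ evenRows M) /
          pr (fun M : Fin (m n) → Fin n → Bool => evenRows M))
      atTop (nhds 1)) :
    Tendsto (fun n : ℕ =>
        pr (fun M : Fin (m n) → Fin n → Bool => discLE M ((t n : ℝ) + 1)))
      atTop (nhds 1) := by
  refine tendsto_of_tendsto_of_tendsto_of_le_of_le' h tendsto_const_nhds ?_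
    (Eventually.of_forall fun n => pr_le_one _)
  filter_upwards [eventually_gt_atTop 0] with n hn
  exact pr_discLE_and_evenRows_div_le ⟨0, hn⟩ (t n)
end

section
/- Let n be even, let u1, u2 ∈ {−1,+1}^n be balanced colorings whose Hamming distance is d with 0 < d < n (d is necessarily even), and let e be a uniformly random even-cardinality subset of {1,…,n}. Then Pr( ∑_{i ∈ e} u1_i = 0 and ∑_{i ∈ e} u2_i = 0 ) = binom(d, d/2) · binom(n−d, (n−d)/2) / 2^{n−1}. -/
open scoped Classical symmDiff
open Finset

lemma myCard_symmDiff {α : Type*} [DecidableEq α] (s t : Finset α) :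
    (s ∆ t).card + 2 * (s ∩ t).card = s.card + t.card := by
  have hd : Disjoint (s \ t) (t \ s) := disjoint_sdiff_sdiff
  have h1 := Finset.card_sdiff_add_card_inter s t
  have h2 := Finset.card_sdiff_add_card_inter t s
  rw [Finset.inter_comm] at h2
  rw [symmDiff_def, Finset.sup_eq_union, Finset.card_union_of_disjoint hd]
  omega

lemma sum_pm_one {n : ℕ} (A t : Finset (Fin n)) (u : Fin n → ℤ)
    (hu : ∀ i ∈ A, u i = 1 ∨ u i = -1) (ht : t ⊆ A) :
    ∑ i ∈ t, u i = 2 * ((t.filter (fun i => u i = 1)).card : ℤ) - t.card := by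
  have : ∑ i ∈ t, u i = ∑ i ∈ t, (2 * (if u i = 1 then (1:ℤ) else 0) - 1) := by
    refine Finset.sum_congr rfl fun i hi => ?_
    rcases hu i (ht hi) with h | h <;> simp [h]
  rw [this, Finset.sum_sub_distrib, ← Finset.mul_sum]
  simp [Finset.sum_boole]

lemma key_identity {n : ℕ} (A t : Finset (Fin n)) (u : Fin n → ℤ)
    (hu : ∀ i ∈ A, u i = 1 ∨ u i = -1) (ht : t ⊆ A) :
    ((t ∆ (A.filter (fun i => u i = 1))).card : ℤ)
      = ((A.filter (fun i => u i = 1)).card : ℤ) - ∑ i ∈ t, u i := by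
  set P := A.filter (fun i => u i = 1) with hP
  have hfi : t.filter (fun i => u i = 1) = t ∩ P := by
    ext i
    simp only [Finset.mem_filter, Finset.mem_inter, hP]
    exact ⟨fun ⟨h1, h2⟩ => ⟨h1, ht h1, h2⟩, fun ⟨h1, _, h2⟩ => ⟨h1, h2⟩⟩
  have hs := sum_pm_one A t u hu ht
  rw [hfi] at hs
  have hc : ((t ∆ P).card : ℤ) + 2 * ((t ∩ P).card : ℤ) = (t.card : ℤ) + (P.card : ℤ) := by
    exact_mod_cast myCard_symmDiff t P
  rw [hs]
  linarith

lemma count_zero_sum {n : ℕ} (A : Finset (Fin n)) (u : Fin n → ℤ)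
    (hu : ∀ i ∈ A, u i = 1 ∨ u i = -1) :
    (A.powerset.filter (fun t => ∑ i ∈ t, u i = 0)).card
      = A.card.choose ((A.filter (fun i => u i = 1)).card) := by
  set P := A.filter (fun i => u i = 1) with hP
  have hPA : P ⊆ A := Finset.filter_subset _ _
  have hsub : ∀ t : Finset (Fin n), t ⊆ A → t ∆ P ⊆ A := fun t htA => by
    rw [symmDiff_def, Finset.sup_eq_union]
    exact Finset.union_subset ((Finset.sdiff_subset).trans htA) ((Finset.sdiff_subset).trans hPA)
  rw [← Finset.card_powersetCard]
  refine Finset.card_bij' (fun t _ => t ∆ P) (fun s _ => s ∆ P) ?_ ?_ ?_ ?_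
  · intro t ht
    simp only [Finset.mem_filter, Finset.mem_powerset] at ht
    obtain ⟨htA, hts⟩ := ht
    rw [Finset.mem_powersetCard]
    refine ⟨hsub t htA, ?_⟩
    have h := key_identity A t u hu htA
    rw [← hP, hts, sub_zero] at h
    exact_mod_cast h
  · intro s hs
    rw [Finset.mem_powersetCard] at hs
    obtain ⟨hsA, hcard⟩ := hs
    simp only [Finset.mem_filter, Finset.mem_powerset]
    refine ⟨hsub s hsA, ?_⟩
    have h := key_identity A (s ∆ P) u hu (hsub s hsA)
    rw [← hP, symmDiff_symmDiff_cancel_right, hcard] at h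
    linarith
  · intro t _
    simp
  · intro s _
    simp

lemma count_prod {n : ℕ} (D : Finset (Fin n)) (p q : Finset (Fin n) → Prop)
    [DecidablePred p] [DecidablePred q] :
    ((Finset.univ : Finset (Finset (Fin n))).filter
        (fun e => p (e ∩ D) ∧ q (e ∩ Dᶜ))).card
      = (D.powerset.filter p).card * (Dᶜ.powerset.filter q).card := by
  rw [← Finset.card_product]
  refine Finset.card_bij' (fun e _ => (e ∩ D, e ∩ Dᶜ)) (fun ts _ => ts.1 ∪ ts.2) ?_ ?_ ?_ ?_
  · intro e he
    simp only [Finset.mem_filter, Finset.mem_univ, true_and] at he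
    simp only [Finset.mem_product, Finset.mem_filter, Finset.mem_powerset]
    exact ⟨⟨Finset.inter_subset_right, he.1⟩, ⟨Finset.inter_subset_right, he.2⟩⟩
  · intro ts hts
    simp only [Finset.mem_product, Finset.mem_filter, Finset.mem_powerset] at hts
    obtain ⟨⟨ht, hp⟩, ⟨hs, hq⟩⟩ := hts
    have h1 : (ts.1 ∪ ts.2) ∩ D = ts.1 := by
      rw [Finset.union_inter_distrib_right, Finset.inter_eq_left.mpr ht]
      have : ts.2 ∩ D = ∅ := by
        rw [← Finset.disjoint_iff_inter_eq_empty]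
        exact (disjoint_compl_left).mono_left hs
      rw [this, Finset.union_empty]
    have h2 : (ts.1 ∪ ts.2) ∩ Dᶜ = ts.2 := by
      rw [Finset.union_inter_distrib_right, Finset.inter_eq_left.mpr hs]
      have : ts.1 ∩ Dᶜ = ∅ := by
        rw [← Finset.disjoint_iff_inter_eq_empty]
        exact (disjoint_compl_right).mono_left ht
      rw [this, Finset.empty_union]
    simp only [Finset.mem_filter, Finset.mem_univ, true_and]
    rw [h1, h2]
    exact ⟨hp, hq⟩
  · intro e _
    simp only
    rw [← Finset.inter_union_distrib_left, Finset.union_compl, Finset.inter_univ]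
  · intro ts hts
    simp only [Finset.mem_product, Finset.mem_filter, Finset.mem_powerset] at hts
    obtain ⟨⟨ht, _⟩, ⟨hs, _⟩⟩ := hts
    have h1 : (ts.1 ∪ ts.2) ∩ D = ts.1 := by
      rw [Finset.union_inter_distrib_right, Finset.inter_eq_left.mpr ht]
      have : ts.2 ∩ D = ∅ := by
        rw [← Finset.disjoint_iff_inter_eq_empty]
        exact (disjoint_compl_left).mono_left hs
      rw [this, Finset.union_empty]
    have h2 : (ts.1 ∪ ts.2) ∩ Dᶜ = ts.2 := by
      rw [Finset.union_inter_distrib_right, Finset.inter_eq_left.mpr hs]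
      have : ts.1 ∩ Dᶜ = ∅ := by
        rw [← Finset.disjoint_iff_inter_eq_empty]
        exact (disjoint_compl_right).mono_left ht
      rw [this, Finset.empty_union]
    rw [h1, h2]

lemma card_even_subsets (n : ℕ) (hn : 0 < n) :
    ((Finset.univ : Finset (Finset (Fin n))).filter (fun s => Even s.card)).card
      = 2 ^ (n - 1) := by
  set i0 : Fin n := ⟨0, hn⟩
  have hflip : ∀ s : Finset (Fin n), (s ∆ {i0}).card % 2 = (s.card + 1) % 2 := by
    intro s
    have hc := myCard_symmDiff s {i0}
    rw [Finset.card_singleton] at hc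
    omega
  have hbij : ((Finset.univ : Finset (Finset (Fin n))).filter (fun s => Even s.card)).card
      = ((Finset.univ : Finset (Finset (Fin n))).filter (fun s => ¬ Even s.card)).card := by
    refine Finset.card_bij' (fun s _ => s ∆ {i0}) (fun s _ => s ∆ {i0}) ?_ ?_ ?_ ?_
    · intro s hs
      simp only [Finset.mem_filter, Finset.mem_univ, true_and, Nat.even_iff] at hs ⊢
      have := hflip s
      omega
    · intro s hs
      simp only [Finset.mem_filter, Finset.mem_univ, true_and, Nat.even_iff] at hs ⊢
      have := hflip s
      omega
    · intro s _; simp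
    · intro s _; simp
  have htot := Finset.card_filter_add_card_filter_not
      (s := (Finset.univ : Finset (Finset (Fin n)))) (p := fun s => Even s.card)
  rw [Finset.card_univ, Fintype.card_finset, Fintype.card_fin] at htot
  have h2 : 2 ^ n = 2 * 2 ^ (n - 1) := by
    rw [← pow_succ']
    congr 1
    omega
  omega

lemma card_filter_subtype {α : Type*} [Fintype α] (p q : α → Prop)
    [DecidablePred p] [DecidablePred q] :
    (Finset.univ.filter (fun e : {x // p x} => q e.1)).card
      = (Finset.univ.filter (fun s => p s ∧ q s)).card := by
  refine Finset.card_bij' (fun e _ => e.1) (fun s hs => ⟨s, ?_⟩) ?_ ?_ ?_ ?_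
  · exact (Finset.mem_filter.mp hs).2.1
  · intro e he
    simp only [Finset.mem_filter, Finset.mem_univ, true_and] at he ⊢
    exact ⟨e.2, he⟩
  · intro s hs
    simp only [Finset.mem_filter, Finset.mem_univ, true_and] at hs ⊢
    exact hs.2
  · intro e _; rfl
  · intro s _; rfl

theorem prob_good_pair (n d : ℕ) (hn : Even n) (u1 u2 : Fin n → ℤ)
    (hu1 : ∀ i, u1 i = 1 ∨ u1 i = -1) (hu2 : ∀ i, u2 i = 1 ∨ u2 i = -1)
    (hbal1 : (Finset.univ.filter (fun i => u1 i = 1)).card = n / 2)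
    (hbal2 : (Finset.univ.filter (fun i => u2 i = 1)).card = n / 2)
    (hd : (Finset.univ.filter (fun i => u1 i ≠ u2 i)).card = d)
    (hd0 : 0 < d) (hdn : d < n) :
    pr (fun e : {s : Finset (Fin n) // Even s.card} =>
        (∑ i ∈ e.1, u1 i) = 0 ∧ (∑ i ∈ e.1, u2 i) = 0) =
      (d.choose (d / 2) : ℝ) * ((n - d).choose ((n - d) / 2) : ℝ) / 2 ^ (n - 1) := by
  have hn0 : 0 < n := hd0.trans hdn
  set D : Finset (Fin n) := Finset.univ.filter (fun i => u1 i ≠ u2 i) with hDdef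
  -- basic facts about D
  have hD2 : ∀ i ∈ D, u2 i = - u1 i := by
    intro i hi
    have hne : u1 i ≠ u2 i := (Finset.mem_filter.mp hi).2
    rcases hu1 i with h | h <;> rcases hu2 i with h' | h' <;> omega
  have hC2 : ∀ i ∈ Dᶜ, u2 i = u1 i := by
    intro i hi
    have : ¬ (u1 i ≠ u2 i) := by
      intro h
      exact (Finset.mem_compl.mp hi) (Finset.mem_filter.mpr ⟨Finset.mem_univ i, h⟩)
    omega
  have hDcard : D.card = d := hd
  have hDc : Dᶜ.card = n - d := by
    rw [Finset.card_compl, Fintype.card_fin, hDcard]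
  -- event decomposition
  have hsplit : ∀ (v : Fin n → ℤ) (s : Finset (Fin n)),
      ∑ i ∈ s, v i = ∑ i ∈ s ∩ D, v i + ∑ i ∈ s ∩ Dᶜ, v i := by
    intro v s
    rw [← Finset.sum_union ((disjoint_compl_right).mono
      Finset.inter_subset_right Finset.inter_subset_right),
      ← Finset.inter_union_distrib_left, Finset.union_compl, Finset.inter_univ]
  have hiff : ∀ s : Finset (Fin n),
      ((∑ i ∈ s, u1 i) = 0 ∧ (∑ i ∈ s, u2 i) = 0)
        ↔ ((∑ i ∈ s ∩ D, u1 i) = 0 ∧ (∑ i ∈ s ∩ Dᶜ, u1 i) = 0) := by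
    intro s
    have h2D : ∑ i ∈ s ∩ D, u2 i = - ∑ i ∈ s ∩ D, u1 i := by
      rw [← Finset.sum_neg_distrib]
      exact Finset.sum_congr rfl fun i hi => hD2 i (Finset.mem_of_mem_inter_right hi)
    have h2C : ∑ i ∈ s ∩ Dᶜ, u2 i = ∑ i ∈ s ∩ Dᶜ, u1 i :=
      Finset.sum_congr rfl fun i hi => hC2 i (Finset.mem_of_mem_inter_right hi)
    rw [hsplit u1 s, hsplit u2 s, h2D, h2C]
    constructor
    · rintro ⟨h1, h2⟩; constructor <;> linarith
    · rintro ⟨h1, h2⟩; constructor <;> linarith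
  -- event implies even cardinality
  have heven : ∀ s : Finset (Fin n), (∑ i ∈ s, u1 i) = 0 → Even s.card := by
    intro s hs
    have h := sum_pm_one Finset.univ s u1 (fun i _ => hu1 i) (Finset.subset_univ s)
    rw [hs] at h
    have h2 : s.card = 2 * (s.filter (fun i => u1 i = 1)).card := by exact_mod_cast by linarith
    rw [h2]
    exact even_two_mul _
  -- intersection cardinalities
  have hsplitP : ∀ v : Fin n → ℤ,
      (D.filter (fun i => v i = 1)).card + (Dᶜ.filter (fun i => v i = 1)).card
        = (Finset.univ.filter (fun i => v i = 1)).card := by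
    intro v
    rw [← Finset.card_union_of_disjoint (Finset.disjoint_filter_filter disjoint_compl_right),
      ← Finset.filter_union, Finset.union_compl]
  have hXY : (D.filter (fun i => u1 i = 1)).card + (Dᶜ.filter (fun i => u1 i = 1)).card
      = n / 2 := by rw [hsplitP u1, hbal1]
  have hY2 : (Dᶜ.filter (fun i => u2 i = 1)).card = (Dᶜ.filter (fun i => u1 i = 1)).card := by
    congr 1
    exact Finset.filter_congr fun i hi => by rw [hC2 i hi]
  have hX2 : (D.filter (fun i => u2 i = 1)).card
      = d - (D.filter (fun i => u1 i = 1)).card := by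
    have he : D.filter (fun i => u2 i = 1) = D \ D.filter (fun i => u1 i = 1) := by
      apply Finset.ext
      intro i
      simp only [Finset.mem_filter, Finset.mem_sdiff, not_and]
      constructor
      · rintro ⟨hiD, h2⟩
        refine ⟨hiD, fun _ h1 => ?_⟩
        have := hD2 i hiD
        omega
      · rintro ⟨hiD, h⟩
        have h1 := h hiD
        have := hD2 i hiD
        have := hu1 i
        exact ⟨hiD, by omega⟩
    rw [he, Finset.card_sdiff_of_subset (Finset.filter_subset _ _), hDcard]
  have hXY2 : (d - (D.filter (fun i => u1 i = 1)).card)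
      + (Dᶜ.filter (fun i => u1 i = 1)).card = n / 2 := by
    rw [← hX2, ← hY2, hsplitP u2, hbal2]
  have hXled : (D.filter (fun i => u1 i = 1)).card ≤ d :=
    hDcard ▸ Finset.card_filter_le _ _
  have hneven : n % 2 = 0 := Nat.even_iff.mp hn
  have e1 : (D.filter (fun i => u1 i = 1)).card = d / 2 := by omega
  have e2 : (Dᶜ.filter (fun i => u1 i = 1)).card = (n - d) / 2 := by omega
  -- counting
  have hnum : (Finset.univ.filter (fun e : {s : Finset (Fin n) // Even s.card} =>
        (∑ i ∈ e.1, u1 i) = 0 ∧ (∑ i ∈ e.1, u2 i) = 0)).card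
      = d.choose (d / 2) * (n - d).choose ((n - d) / 2) := by
    rw [card_filter_subtype (fun s : Finset (Fin n) => Even s.card)
      (fun s : Finset (Fin n) => (∑ i ∈ s, u1 i) = 0 ∧ (∑ i ∈ s, u2 i) = 0)]
    have hfe : (Finset.univ.filter (fun s : Finset (Fin n) =>
          Even s.card ∧ ((∑ i ∈ s, u1 i) = 0 ∧ (∑ i ∈ s, u2 i) = 0)))
        = Finset.univ.filter (fun s =>
            (∑ i ∈ s ∩ D, u1 i) = 0 ∧ (∑ i ∈ s ∩ Dᶜ, u1 i) = 0) := by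
      refine Finset.filter_congr fun s _ => ?_
      rw [← hiff s]
      exact ⟨fun h => h.2, fun h => ⟨heven s h.1, h⟩⟩
    rw [hfe]
    have hcp := count_prod D (fun t => ∑ i ∈ t, u1 i = 0) (fun t => ∑ i ∈ t, u1 i = 0)
    rw [count_zero_sum D u1 (fun i _ => hu1 i), count_zero_sum Dᶜ u1 (fun i _ => hu1 i),
      hDcard, hDc, e1, e2] at hcp
    exact hcp
  have hcardΩ : Fintype.card {s : Finset (Fin n) // Even s.card} = 2 ^ (n - 1) := by
    rw [Fintype.card_subtype]
    exact card_even_subsets n hn0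
  rw [pr, hcardΩ, Finset.filter_congr_decidable, hnum]
  push_cast
  ring
end

section
/- There exists a constant C3 > 0 such that, as n → ∞ along multiples of 4, ∑_{j ∈ ℤ, |j| ≤ t0} Pr(G = n/4 − j) · exp( 16·j² / (C3·n·log n) ) tends to 1; moreover this sum equals 1 − O(1/√(log n)). -/
open scoped Classical
open Finset Filter

/-- `pG n k` is `Pr(G = k)` for the hypergeometric random variable `G(n, n/2, n/2)`,
extended by `0` outside `{0, …, n/2}` (here `k : ℤ`). -/
noncomputable def pG (n : ℕ) (k : ℤ) : ℝ :=
  if 0 ≤ k then (((n / 2).choose k.toNat : ℝ)) ^ 2 / (n.choose (n / 2) : ℝ) else 0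

/-- `t0 = √n · (log n)^{1/4}`. -/
noncomputable def t0 (n : ℕ) : ℝ := Real.sqrt n * Real.log n ^ ((1 : ℝ) / 4)

/-- The central sum `∑_{|j| ≤ t0} Pr(G = n/4 − j) · exp(16j²/(C3 n log n))`. -/
noncomputable def centralSum (C3 : ℝ) (n : ℕ) : ℝ :=
  ∑ j ∈ (Finset.Icc (-(n : ℤ)) (n : ℤ)).filter (fun j : ℤ => |(j : ℝ)| ≤ t0 n),
    pG n (((n / 4 : ℕ) : ℤ) - j) * Real.exp (16 * (j : ℝ) ^ 2 / (C3 * n * Real.log n))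


/-! With `n = 4k`, `G` has mean `n/4` and variance `n² / (16 (n - 1)) ≤ n/8`, computed from the
Vandermonde-type identities for `∑ i ^ r * (m.choose i) ^ 2`, `r ≤ 2`. Since `t0² = n √(log n)`,
Chebyshev's inequality leaves mass at most `1 / (8 √(log n))` outside the window `|j| ≤ t0`.
With `C3 = 1` the exponential weight on the window lies between `1` and
`exp (16 / √(log n)) ≤ 1 + 32 / √(log n)`, so the central sum is within `32 / √(log n)` of `1`. -/

open Real

namespace Nat

theorem two_mul_sum_range_mul_choose_sq (m : ℕ) :
    2 * ∑ i ∈ range (m + 1), i * m.choose i ^ 2 = m * (2 * m).choose m := by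
  have reflect : ∑ i ∈ range (m + 1), (m - i) * m.choose i ^ 2
      = ∑ i ∈ range (m + 1), i * m.choose i ^ 2 := by
    rw [← sum_range_reflect]
    refine sum_congr rfl fun i hi => ?_
    have hi : i ≤ m := mem_range_succ_iff.mp hi
    rw [add_tsub_cancel_right, Nat.sub_sub_self hi, choose_symm hi]
  calc 2 * ∑ i ∈ range (m + 1), i * m.choose i ^ 2
      = ∑ i ∈ range (m + 1), ((m - i) * m.choose i ^ 2 + i * m.choose i ^ 2) := by
        rw [sum_add_distrib, reflect, two_mul]
    _ = m * (2 * m).choose m := by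
        rw [← sum_range_choose_sq, mul_sum]
        refine sum_congr rfl fun i hi => ?_
        rw [← add_mul, Nat.sub_add_cancel (mem_range_succ_iff.mp hi)]

theorem sum_range_sq_mul_choose_sq (m : ℕ) :
    ∑ i ∈ range (m + 1 + 1), i ^ 2 * (m + 1).choose i ^ 2 = (m + 1) ^ 2 * (2 * m).choose m := by
  rw [sum_range_succ', ← sum_range_choose_sq, mul_sum]
  simp only [zero_pow two_ne_zero, zero_mul, add_zero]
  refine sum_congr rfl fun i _ => ?_
  rw [← mul_pow, ← mul_pow, mul_comm (i + 1), ← add_one_mul_choose_eq]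

end Nat

theorem sum_range_sq_sub_half_mul_choose_sq_le (m : ℕ) :
    ∑ i ∈ range (m + 1), ((i : ℝ) - m / 2) ^ 2 * (m.choose i : ℝ) ^ 2
      ≤ (m : ℝ) / 4 * ((2 * m).choose m : ℝ) := by
  rcases m with _ | m
  · simp
  have h0 : ∑ i ∈ range (m + 1 + 1), ((m + 1).choose i : ℝ) ^ 2
      = (2 * (m + 1)).choose (m + 1) := by
    exact_mod_cast Nat.sum_range_choose_sq (m + 1)
  have h1 : 2 * ∑ i ∈ range (m + 1 + 1), (i : ℝ) * ((m + 1).choose i : ℝ) ^ 2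
      = (m + 1) * (2 * (m + 1)).choose (m + 1) := by
    exact_mod_cast Nat.two_mul_sum_range_mul_choose_sq (m + 1)
  have h2 : ∑ i ∈ range (m + 1 + 1), (i : ℝ) ^ 2 * ((m + 1).choose i : ℝ) ^ 2
      = (m + 1) ^ 2 * (2 * m).choose m := by
    exact_mod_cast Nat.sum_range_sq_mul_choose_sq m
  have h3 : ((m : ℝ) + 1) * (2 * (m + 1)).choose (m + 1)
      = 2 * (2 * m + 1) * (2 * m).choose m := by
    exact_mod_cast Nat.centralBinom_eq_two_mul_choose (m + 1) ▸
      Nat.centralBinom_eq_two_mul_choose m ▸ Nat.succ_mul_centralBinom_succ m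
  have expand :
      ∑ i ∈ range (m + 1 + 1), ((i : ℝ) - ↑(m + 1) / 2) ^ 2 * ((m + 1).choose i : ℝ) ^ 2 =
        ∑ i ∈ range (m + 1 + 1), (i : ℝ) ^ 2 * ((m + 1).choose i : ℝ) ^ 2
          - (m + 1) * ∑ i ∈ range (m + 1 + 1), (i : ℝ) * ((m + 1).choose i : ℝ) ^ 2
          + (m + 1) ^ 2 / 4 * ∑ i ∈ range (m + 1 + 1), ((m + 1).choose i : ℝ) ^ 2 := by
    simp only [mul_sum, ← sum_sub_distrib, ← sum_add_distrib]
    refine sum_congr rfl fun i _ => ?_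
    push_cast
    ring
  rw [expand, h2, h0]
  push_cast
  nlinarith [mul_nonneg (Nat.cast_nonneg (α := ℝ) m)
    (Nat.cast_nonneg (α := ℝ) ((2 * m).choose m))]

theorem Finset.sum_filter_lt_abs_le_div_sq {ι : Type*} (s : Finset ι) {p f : ι → ℝ}
    (hp : ∀ i ∈ s, 0 ≤ p i) {t : ℝ} (ht : 0 < t) :
    ∑ i ∈ s with t < |f i|, p i ≤ (∑ i ∈ s, p i * f i ^ 2) / t ^ 2 := by
  rw [le_div_iff₀ (by positivity), sum_mul]
  calc ∑ i ∈ s with t < |f i|, p i * t ^ 2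
      ≤ ∑ i ∈ s with t < |f i|, p i * f i ^ 2 := by
        refine sum_le_sum fun i hi => ?_
        rw [mem_filter] at hi
        have : t ^ 2 ≤ f i ^ 2 := by
          rw [← sq_abs (f i)]; exact pow_le_pow_left₀ ht.le hi.2.le 2
        exact mul_le_mul_of_nonneg_left this (hp i hi.1)
    _ ≤ ∑ i ∈ s, p i * f i ^ 2 :=
        sum_le_sum_of_subset_of_nonneg (filter_subset _ _)
          fun i hi _ => mul_nonneg (hp i hi) (sq_nonneg _)

theorem abs_sum_mul_sub_one_le {ι : Type*} (s : Finset ι) {p e : ι → ℝ} {ε : ℝ}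
    (hp : ∀ i ∈ s, 0 ≤ p i) (hp_le : ∑ i ∈ s, p i ≤ 1) (hp_ge : 1 - ε ≤ ∑ i ∈ s, p i)
    (he : ∀ i ∈ s, 1 ≤ e i ∧ e i ≤ 1 + ε) :
    |∑ i ∈ s, p i * e i - 1| ≤ ε := by
  have lower : ∑ i ∈ s, p i ≤ ∑ i ∈ s, p i * e i :=
    sum_le_sum fun i hi => le_mul_of_one_le_right (hp i hi) (he i hi).1
  have upper : ∑ i ∈ s, p i * e i ≤ (∑ i ∈ s, p i) * (1 + ε) := by
    rw [sum_mul]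
    exact sum_le_sum fun i hi => mul_le_mul_of_nonneg_left (he i hi).2 (hp i hi)
  rw [abs_le]
  constructor <;> nlinarith

lemma pG_nonneg (n : ℕ) (i : ℤ) : 0 ≤ pG n i := by
  unfold pG; split <;> positivity

lemma pG_eq_zero_of_lt {n : ℕ} {i : ℤ} (hi : ((n / 2 : ℕ) : ℤ) < i) : pG n i = 0 := by
  rw [pG, if_pos (by omega), Nat.choose_eq_zero_of_lt (by omega)]
  simp

lemma pG_two_mul_natCast (m i : ℕ) :
    pG (2 * m) i = (m.choose i : ℝ) ^ 2 / (2 * m).choose m := by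
  simp [pG]

lemma sum_range_pG_two_mul (m : ℕ) : ∑ i ∈ range (m + 1), pG (2 * m) i = 1 := by
  have := Nat.choose_pos (n := 2 * m) (k := m) (by omega)
  simp_rw [pG_two_mul_natCast, ← sum_div]
  rw [div_eq_one_iff_eq (by positivity)]
  exact_mod_cast Nat.sum_range_choose_sq m

lemma sum_range_pG_two_mul_mul_sq_sub_le (m : ℕ) :
    ∑ i ∈ range (m + 1), pG (2 * m) i * ((i : ℝ) - m / 2) ^ 2 ≤ (m : ℝ) / 4 := by
  have := Nat.choose_pos (n := 2 * m) (k := m) (by omega)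
  simp_rw [pG_two_mul_natCast, div_mul_eq_mul_div, ← sum_div]
  rw [div_le_iff₀ (by positivity)]
  simpa only [mul_comm] using sum_range_sq_sub_half_mul_choose_sq_le m

lemma sum_Icc_pG_sub_mul (n : ℕ) (g : ℤ → ℝ) :
    ∑ j ∈ Icc (-(n : ℤ)) n, pG n (((n / 4 : ℕ) : ℤ) - j) * g j
      = ∑ i ∈ range (n / 2 + 1), pG n i * g (((n / 4 : ℕ) : ℤ) - i) := by
  set c : ℤ := ((n / 4 : ℕ) : ℤ)
  have reindex : ∑ i ∈ range (n / 2 + 1), pG n i * g (c - i)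
      = ∑ j ∈ (range (n / 2 + 1)).image (fun i : ℕ => c - i), pG n (c - j) * g j := by
    rw [sum_image fun a _ b _ h => by simpa using h]
    simp only [sub_sub_cancel]
  rw [reindex]
  refine (sum_subset (fun j hj => ?_) fun j _ hj => ?_).symm
  · simp only [mem_image, mem_range] at hj
    obtain ⟨i, hi, rfl⟩ := hj
    rw [mem_Icc]
    omega
  · simp only [mem_image, mem_range, not_exists, not_and] at hj
    rcases lt_or_ge (c - j) 0 with hneg | hnonneg
    · rw [pG, if_neg hneg.not_ge, zero_mul]
    · have hlt : ((n / 2 : ℕ) : ℤ) < c - j := by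
        by_contra hle
        exact hj (c - j).toNat (by omega) (by omega)
      rw [pG_eq_zero_of_lt hlt, zero_mul]

lemma sum_Icc_pG_sub {n : ℕ} (hn : 2 ∣ n) :
    ∑ j ∈ Icc (-(n : ℤ)) n, pG n (((n / 4 : ℕ) : ℤ) - j) = 1 := by
  obtain ⟨m, rfl⟩ := hn
  have h := sum_Icc_pG_sub_mul (2 * m) fun _ => 1
  simp only [mul_one] at h
  rw [h, Nat.mul_div_cancel_left m two_pos]
  exact sum_range_pG_two_mul m

lemma sum_Icc_pG_sub_mul_sq_le {n : ℕ} (hn : 4 ∣ n) :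
    ∑ j ∈ Icc (-(n : ℤ)) n, pG n (((n / 4 : ℕ) : ℤ) - j) * (j : ℝ) ^ 2 ≤ n / 8 := by
  obtain ⟨k, rfl⟩ := hn
  rw [sum_Icc_pG_sub_mul, show 4 * k / 2 = 2 * k by omega, show 4 * k / 4 = k by omega,
    show 4 * k = 2 * (2 * k) by ring]
  calc ∑ i ∈ range (2 * k + 1), pG (2 * (2 * k)) i * (((k : ℤ) - i : ℤ) : ℝ) ^ 2
      = ∑ i ∈ range (2 * k + 1), pG (2 * (2 * k)) i * ((i : ℝ) - (2 * k : ℕ) / 2) ^ 2 := by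
        refine sum_congr rfl fun i _ => ?_
        push_cast
        ring
    _ ≤ (2 * k : ℕ) / 4 := sum_range_pG_two_mul_mul_sq_sub_le (2 * k)
    _ = ((2 * (2 * k) : ℕ) : ℝ) / 8 := by push_cast; ring

lemma sum_window_pG_le_one {n : ℕ} (hn : 2 ∣ n) (t : ℝ) :
    ∑ j ∈ (Icc (-(n : ℤ)) n).filter (fun j : ℤ => |(j : ℝ)| ≤ t),
      pG n (((n / 4 : ℕ) : ℤ) - j) ≤ 1 :=
  sum_Icc_pG_sub hn ▸
    sum_le_sum_of_subset_of_nonneg (filter_subset _ _) fun _ _ _ => pG_nonneg _ _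

lemma one_sub_le_sum_window_pG {n : ℕ} (hn : 4 ∣ n) {t : ℝ} (ht : 0 < t) :
    1 - n / (8 * t ^ 2) ≤ ∑ j ∈ (Icc (-(n : ℤ)) n).filter (fun j : ℤ => |(j : ℝ)| ≤ t),
      pG n (((n / 4 : ℕ) : ℤ) - j) := by
  have hsplit := sum_filter_add_sum_filter_not (Icc (-(n : ℤ)) n)
    (fun j : ℤ => |(j : ℝ)| ≤ t) fun j => pG n (((n / 4 : ℕ) : ℤ) - j)
  rw [sum_Icc_pG_sub ((by norm_num : 2 ∣ 4).trans hn)] at hsplit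
  simp only [not_le] at hsplit
  have htail := (Icc (-(n : ℤ)) n).sum_filter_lt_abs_le_div_sq
    (p := fun j => pG n (((n / 4 : ℕ) : ℤ) - j)) (f := fun j : ℤ => (j : ℝ))
    (fun _ _ => pG_nonneg _ _) ht
  have hvar := div_le_div_of_nonneg_right (sum_Icc_pG_sub_mul_sq_le hn) (sq_nonneg t)
  rw [div_div] at hvar
  linarith

lemma exp_le_one_add_two_mul {x : ℝ} (hx0 : 0 ≤ x) (hx1 : x ≤ 1) : exp x ≤ 1 + 2 * x := by
  have h := abs_exp_sub_one_le (abs_le.mpr ⟨by linarith, hx1⟩)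
  rw [abs_of_nonneg hx0] at h
  linarith [le_abs_self (exp x - 1)]

lemma t0_sq (n : ℕ) : t0 n ^ 2 = n * √(log n) := by
  rw [t0, mul_pow, sq_sqrt n.cast_nonneg, ← rpow_natCast, ← rpow_mul (log_natCast_nonneg n),
    sqrt_eq_rpow]
  norm_num

theorem abs_centralSum_one_sub_one_le {n : ℕ} (hn : 4 ∣ n) (hL : 256 ≤ log n) :
    |centralSum 1 n - 1| ≤ 32 / √(log n) := by
  set s := √(log n)
  have hs : 16 ≤ s := le_sqrt_of_sq_le (by linarith)
  have hL_eq : log n = s ^ 2 := (sq_sqrt (by linarith)).symm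
  have hn0 : (0 : ℝ) < n := by
    rcases Nat.eq_zero_or_pos n with rfl | h
    · norm_num at hL
    · exact_mod_cast h
  have ht0 : t0 n ^ 2 = n * s := t0_sq n
  have ht0_pos : 0 < t0 n := mul_pos (sqrt_pos.mpr hn0) (rpow_pos_of_pos (by linarith) _)
  apply abs_sum_mul_sub_one_le _ (fun _ _ => pG_nonneg _ _)
    (sum_window_pG_le_one ((by norm_num : 2 ∣ 4).trans hn) _)
  · calc 1 - 32 / s ≤ 1 - 1 / (8 * s) := by
          rw [sub_le_sub_iff_left, div_le_div_iff₀ (by positivity) (by positivity)]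
          linarith
      _ = 1 - n / (8 * t0 n ^ 2) := by rw [ht0]; field_simp
      _ ≤ _ := one_sub_le_sum_window_pG hn ht0_pos
  · intro j hj
    have hj2 : (j : ℝ) ^ 2 ≤ n * s :=
      ht0 ▸ sq_le_sq.mpr ((mem_filter.mp hj).2.trans (le_abs_self _))
    set x := 16 * (j : ℝ) ^ 2 / (1 * n * log n)
    have hx0 : 0 ≤ x := by positivity
    have hx : x ≤ 16 / s := by
      rw [div_le_div_iff₀ (by positivity) (by positivity), hL_eq]
      nlinarith
    have hx1 : x ≤ 1 := hx.trans ((div_le_one (by positivity)).mpr hs)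
    refine ⟨one_le_exp hx0, (exp_le_one_add_two_mul hx0 hx1).trans ?_⟩
    rw [show (32 : ℝ) / s = 2 * (16 / s) by ring]
    linarith

theorem central_sum_tendsto_one :
    ∃ C3 : ℝ, 0 < C3 ∧
      (Tendsto (fun k : ℕ => centralSum C3 (4 * k)) atTop (nhds 1) ∧
        ∃ c : ℝ, 0 < c ∧ ∀ᶠ k : ℕ in atTop,
          |centralSum C3 (4 * k) - 1| ≤ c / Real.sqrt (Real.log ((4 * k : ℕ) : ℝ))) := by
  have hlog : Tendsto (fun k : ℕ => log ((4 * k : ℕ) : ℝ)) atTop atTop :=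
    tendsto_log_atTop.comp <| tendsto_natCast_atTop_atTop.comp <|
      tendsto_id.const_mul_atTop' (by norm_num)
  have hbound : ∀ᶠ k : ℕ in atTop,
      |centralSum 1 (4 * k) - 1| ≤ 32 / √(log ((4 * k : ℕ) : ℝ)) :=
    (hlog.eventually_ge_atTop 256).mono fun k hk =>
      abs_centralSum_one_sub_one_le (dvd_mul_right 4 k) hk
  have hrate : Tendsto (fun k : ℕ => 32 / √(log ((4 * k : ℕ) : ℝ))) atTop (nhds 0) :=
    tendsto_const_nhds.div_atTop (tendsto_sqrt_atTop.comp hlog)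
  exact ⟨1, one_pos, tendsto_sub_nhds_zero_iff.mp (squeeze_zero_norm' hbound hrate),
    32, by norm_num, hbound⟩
end

section
/- Let ε ∈ (0, 1/3), let M be an arbitrary real n×n matrix, and let B ≥ 0. If |yᵀ M x| ≤ B for every x ∈ T and every y ∈ T', then for every z ∈ ℝ^n with ‖z‖ = 1 and ∑_i z_i = 0, one has ‖Mz‖ ≤ (1 − 3ε)^{−1}·B. -/
open Finset
open scoped RealInnerProductSpace

/-- `x` lies on the lattice `(ε/√n)·ℤ^n`. -/
def onLattice (n : ℕ) (ε : ℝ) (x : Fin n → ℝ) : Prop :=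
  ∀ i, ∃ k : ℤ, x i = (k : ℝ) * (ε / Real.sqrt n)

namespace NetRedAux

noncomputable def EV {n : ℕ} (u : Fin n → ℝ) : EuclideanSpace ℝ (Fin n) :=
  (WithLp.equiv 2 (Fin n → ℝ)).symm u

lemma EV_norm {n : ℕ} (u : Fin n → ℝ) : ‖EV u‖ = Real.sqrt (∑ i, u i ^ 2) := by
  rw [EV, EuclideanSpace.norm_eq]; simp [sq_abs]

lemma EV_inner {n : ℕ} (a b : Fin n → ℝ) : ⟪EV a, EV b⟫ = ∑ i, a i * b i := by
  simp [EV, PiLp.inner_apply, RCLike.inner_apply, mul_comm]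

lemma EV_sub {n : ℕ} (a b : Fin n → ℝ) : EV (a - b) = EV a - EV b := by
  simp [EV]

lemma sqrt_le {a b : ℝ} (hb : 0 ≤ b) (h : a ≤ b ^ 2) : Real.sqrt a ≤ b :=
  calc Real.sqrt a ≤ Real.sqrt (b ^ 2) := Real.sqrt_le_sqrt h
    _ = b := Real.sqrt_sq hb

lemma card_filter_lt (n t : ℕ) (ht : t ≤ n) :
    (univ.filter fun i : Fin n => (i : ℕ) < t).card = t := by
  have : (univ.filter fun i : Fin n => (i : ℕ) < t) = Finset.map (Fin.castLEEmb ht) univ := by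
    ext i
    simp only [mem_filter, mem_univ, true_and, mem_map, Fin.castLEEmb_apply]
    constructor
    · intro h; exact ⟨⟨i, h⟩, rfl⟩
    · rintro ⟨a, rfl⟩; exact a.2
  rw [this, Finset.card_map, card_univ, Fintype.card_fin]

lemma sum_sq_le {n : ℕ} {ε q : ℝ} (hε : 0 ≤ ε) (hq : q = ε / Real.sqrt n)
    (d : Fin n → ℝ) (hd : ∀ i, |d i| ≤ q) : ∑ i, d i ^ 2 ≤ ε ^ 2 := by
  rcases Nat.eq_zero_or_pos n with hn | hn
  · subst hn; simp; positivity
  have hn0 : (n : ℝ) ≠ 0 := by positivity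
  have hq2 : q ^ 2 = ε ^ 2 / n := by
    rw [hq, div_pow, Real.sq_sqrt (Nat.cast_nonneg n)]
  calc ∑ i, d i ^ 2 ≤ ∑ _i : Fin n, q ^ 2 := by
        refine Finset.sum_le_sum fun i _ => ?_
        have h := hd i
        calc d i ^ 2 = |d i| ^ 2 := (sq_abs _).symm
          _ ≤ q ^ 2 := by nlinarith [abs_nonneg (d i)]
    _ = n * q ^ 2 := by
        rw [Finset.sum_const, Finset.card_univ, Fintype.card_fin, nsmul_eq_mul]
    _ = ε ^ 2 := by rw [hq2, mul_div_cancel₀ _ hn0]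

/-- Rounding toward the origin: a lattice point inside the ball, within `ε`. -/
lemma round_ball {n : ℕ} (hn : 0 < n) {ε : ℝ} (hε : 0 < ε) (w : Fin n → ℝ)
    (hw : ∑ i, w i ^ 2 ≤ 1) :
    ∃ y : Fin n → ℝ, onLattice n ε y ∧ (∑ i, y i ^ 2) ≤ 1 ∧
      ∑ i, (w i - y i) ^ 2 ≤ ε ^ 2 := by
  have hns : (0 : ℝ) < Real.sqrt n := Real.sqrt_pos.mpr (by exact_mod_cast hn)
  set q : ℝ := ε / Real.sqrt n with hqdef
  have hq : 0 < q := div_pos hε hns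
  obtain ⟨y, hy_lat, hkey⟩ : ∃ y : Fin n → ℝ, onLattice n ε y ∧
      ∀ i, |y i| ≤ |w i| ∧ |w i - y i| ≤ q := by
    refine ⟨fun i => ((if 0 ≤ w i then ⌊w i / q⌋ else ⌈w i / q⌉ : ℤ) : ℝ) * q,
      fun i => ⟨_, rfl⟩, fun i => ?_⟩
    by_cases h0 : 0 ≤ w i
    · simp only [if_pos h0]
      have h1 : ((⌊w i / q⌋ : ℤ) : ℝ) * q ≤ w i := (le_div_iff₀ hq).mp (Int.floor_le _)
      have h2 : w i < (((⌊w i / q⌋ : ℤ) : ℝ) + 1) * q := by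
        have := (div_lt_iff₀ hq).mp (Int.lt_floor_add_one (w i / q))
        push_cast at this ⊢; linarith
      have h3 : (0 : ℝ) ≤ ((⌊w i / q⌋ : ℤ) : ℝ) := by
        exact_mod_cast Int.floor_nonneg.mpr (div_nonneg h0 hq.le)
      have h4 : 0 ≤ ((⌊w i / q⌋ : ℤ) : ℝ) * q := mul_nonneg h3 hq.le
      constructor
      · rw [abs_of_nonneg h4, abs_of_nonneg h0]; exact h1
      · rw [abs_of_nonneg (by linarith)]; nlinarith
    · push_neg at h0
      simp only [if_neg (not_le.mpr h0)]
      have h1 : w i ≤ ((⌈w i / q⌉ : ℤ) : ℝ) * q := (div_le_iff₀ hq).mp (Int.le_ceil _)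
      have h2 : ((⌈w i / q⌉ : ℤ) : ℝ) * q < w i + q := by
        have hc := Int.ceil_lt_add_one (w i / q)
        have hwq : (w i / q) * q = w i := div_mul_cancel₀ _ hq.ne'
        nlinarith
      have h3 : ((⌈w i / q⌉ : ℤ) : ℝ) ≤ 0 := by
        have hdq : w i / q ≤ 0 := by
          rw [div_nonpos_iff]; right; exact ⟨h0.le, hq.le⟩
        have hcc : ⌈w i / q⌉ ≤ (0 : ℤ) := Int.ceil_le.mpr (by exact_mod_cast hdq)
        exact_mod_cast hcc
      have h4 : ((⌈w i / q⌉ : ℤ) : ℝ) * q ≤ 0 := by nlinarith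
      constructor
      · rw [abs_of_nonpos h4, abs_of_nonpos h0.le]; linarith
      · rw [abs_of_nonpos (by linarith)]; linarith
  refine ⟨y, hy_lat, ?_, sum_sq_le hε.le hqdef _ fun i => (hkey i).2⟩
  refine le_trans (Finset.sum_le_sum fun i _ => ?_) hw
  have h := (hkey i).1
  calc y i ^ 2 = |y i| ^ 2 := (sq_abs _).symm
    _ ≤ |w i| ^ 2 := by nlinarith [abs_nonneg (y i)]
    _ = w i ^ 2 := sq_abs _

/-- Rounding preserving zero sum, within `ε`. -/
lemma round_zero {n : ℕ} (hn : 0 < n) {ε : ℝ} (hε : 0 < ε) (z : Fin n → ℝ)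
    (hz : ∑ i, z i = 0) :
    ∃ x : Fin n → ℝ, onLattice n ε x ∧ (∑ i, x i) = 0 ∧
      ∑ i, (z i - x i) ^ 2 ≤ ε ^ 2 := by
  have hns : (0 : ℝ) < Real.sqrt n := Real.sqrt_pos.mpr (by exact_mod_cast hn)
  set q : ℝ := ε / Real.sqrt n with hqdef
  have hq : 0 < q := div_pos hε hns
  set k : Fin n → ℤ := fun i => ⌊z i / q⌋ with hk
  have he : ∀ i, 0 ≤ z i - (k i : ℝ) * q ∧ z i - (k i : ℝ) * q < q := by
    intro i
    constructor
    · have := (le_div_iff₀ hq).mp (Int.floor_le (z i / q)); linarith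
    · have := (div_lt_iff₀ hq).mp (Int.lt_floor_add_one (z i / q))
      push_cast at this; nlinarith
  set m : ℤ := -∑ i, k i with hm
  have hmq : (m : ℝ) * q = ∑ i, (z i - (k i : ℝ) * q) := by
    rw [Finset.sum_sub_distrib, hz, ← Finset.sum_mul]
    push_cast [hm]
    ring
  have hm0 : 0 ≤ m := by
    have h1 : 0 ≤ (m : ℝ) * q := hmq ▸ Finset.sum_nonneg fun i _ => (he i).1
    by_contra hc
    push_neg at hc
    have : (m : ℝ) < 0 := by exact_mod_cast hc
    nlinarith
  have hmn : m < n := by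
    have h1 : (m : ℝ) * q < (n : ℝ) * q := by
      rw [hmq]
      calc ∑ i, (z i - (k i : ℝ) * q) < ∑ _i : Fin n, q :=
            Finset.sum_lt_sum_of_nonempty (univ_nonempty_iff.mpr ⟨⟨0, hn⟩⟩)
              (fun i _ => (he i).2)
        _ = (n : ℝ) * q := by
            rw [Finset.sum_const, Finset.card_univ, Fintype.card_fin, nsmul_eq_mul]
    have h2 : (m : ℝ) < n := lt_of_mul_lt_mul_right h1 hq.le
    exact_mod_cast h2
  set t : ℕ := m.toNat with htdef
  have htm : (t : ℤ) = m := Int.toNat_of_nonneg hm0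
  have htn : t ≤ n := by omega
  refine ⟨fun i => ((k i + if (i : ℕ) < t then 1 else 0 : ℤ) : ℝ) * q,
    fun i => ⟨_, rfl⟩, ?_, ?_⟩
  · rw [← Finset.sum_mul]
    have hcount : ∑ i : Fin n, (if (i : ℕ) < t then (1 : ℝ) else 0) = t := by
      rw [Finset.sum_boole, card_filter_lt n t htn]
    have hsum : ∑ i, ((k i + if (i : ℕ) < t then 1 else 0 : ℤ) : ℝ) = 0 := by
      push_cast
      rw [Finset.sum_add_distrib]
      have h1 : ∑ i, ((k i : ℝ)) = -(m : ℝ) := by push_cast [hm]; ring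
      rw [h1, hcount]
      have : (t : ℝ) = (m : ℝ) := by exact_mod_cast htm
      linarith
    rw [hsum, zero_mul]
  · refine sum_sq_le hε.le hqdef _ fun i => ?_
    have h1 := (he i).1
    have h2 := (he i).2
    by_cases hi : (i : ℕ) < t
    · simp only [if_pos hi]
      rw [abs_le]
      push_cast
      constructor <;> nlinarith
    · simp only [if_neg hi]
      rw [abs_le]
      push_cast
      constructor <;> nlinarith

end NetRedAux

open NetRedAux in
/-- Epsilon-net reduction: if `|yᵀMx| ≤ B` on the lattice nets `T` (mean-zero, norm ≤ 1)
and `T'` (norm ≤ 1), then `‖Mz‖ ≤ (1 − 3ε)⁻¹·B` for every unit mean-zero `z`. -/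
theorem net_reduction (n : ℕ) (ε : ℝ) (hε : 0 < ε) (hε' : ε < 1 / 3)
    (M : Matrix (Fin n) (Fin n) ℝ) (B : ℝ) (hB : 0 ≤ B)
    (h : ∀ x y : Fin n → ℝ,
      onLattice n ε x → Real.sqrt (∑ i, x i ^ 2) ≤ 1 → (∑ i, x i) = 0 →
      onLattice n ε y → Real.sqrt (∑ i, y i ^ 2) ≤ 1 →
      |∑ e, ∑ v, y e * M e v * x v| ≤ B) :
    ∀ z : Fin n → ℝ, Real.sqrt (∑ i, z i ^ 2) = 1 → (∑ i, z i) = 0 →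
      Real.sqrt (∑ e, (∑ v, M e v * z v) ^ 2) ≤ (1 - 3 * ε)⁻¹ * B := by
  intro z hz1 hz0
  have hn : 0 < n := by
    rcases Nat.eq_zero_or_pos n with h0 | h0
    · subst h0; simp at hz1
    · exact h0
  -- the supremum of ‖Mu‖ over unit mean-zero u
  set S : Set ℝ := { s | ∃ u : Fin n → ℝ, Real.sqrt (∑ i, u i ^ 2) = 1 ∧ (∑ i, u i) = 0 ∧
      s = Real.sqrt (∑ e, (∑ v, M e v * u v) ^ 2) } with hS
  have hSne : S.Nonempty := ⟨_, z, hz1, hz0, rfl⟩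
  have hSbdd : BddAbove S := by
    refine ⟨Real.sqrt (∑ e, ∑ v, M e v ^ 2), fun s hs => ?_⟩
    obtain ⟨u, hu1, _, rfl⟩ := hs
    have hu2 : ∑ i, u i ^ 2 = 1 := Real.sqrt_eq_one.mp hu1
    apply Real.sqrt_le_sqrt
    refine Finset.sum_le_sum fun e _ => ?_
    calc (∑ v, M e v * u v) ^ 2 ≤ (∑ v, M e v ^ 2) * ∑ v, u v ^ 2 :=
          Finset.sum_mul_sq_le_sq_mul_sq _ _ _
      _ = ∑ v, M e v ^ 2 := by rw [hu2, mul_one]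
  set K : ℝ := sSup S with hK
  have hmem : ∀ u : Fin n → ℝ, Real.sqrt (∑ i, u i ^ 2) = 1 → (∑ i, u i) = 0 →
      Real.sqrt (∑ e, (∑ v, M e v * u v) ^ 2) ≤ K :=
    fun u h1 h2 => le_csSup hSbdd ⟨u, h1, h2, rfl⟩
  have hK0 : 0 ≤ K := le_trans (Real.sqrt_nonneg _) (hmem z hz1 hz0)
  -- scaled bound for mean-zero vectors
  have Klin : ∀ u : Fin n → ℝ, (∑ i, u i) = 0 →
      Real.sqrt (∑ e, (∑ v, M e v * u v) ^ 2) ≤ K * Real.sqrt (∑ i, u i ^ 2) := by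
    intro u hu
    by_cases hu0 : ∑ i, u i ^ 2 = 0
    · have hz : ∀ i, u i = 0 := by
        intro i
        have := (Finset.sum_eq_zero_iff_of_nonneg (fun i _ => sq_nonneg (u i))).mp hu0 i
          (mem_univ i)
        exact pow_eq_zero_iff (by norm_num) |>.mp this
      have hMe : ∀ e, (∑ v, M e v * u v) = 0 := fun e =>
        Finset.sum_eq_zero fun v _ => by rw [hz v, mul_zero]
      simp only [hMe]
      simp [hu0]
    · set c : ℝ := Real.sqrt (∑ i, u i ^ 2) with hc
      have hc0 : 0 < c := Real.sqrt_pos.mpr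
        (lt_of_le_of_ne (Finset.sum_nonneg fun i _ => sq_nonneg _) (Ne.symm hu0))
      have hcsq : c ^ 2 = ∑ i, u i ^ 2 :=
        Real.sq_sqrt (Finset.sum_nonneg fun i _ => sq_nonneg _)
      set u' : Fin n → ℝ := fun i => c⁻¹ * u i with hu'
      have h1 : Real.sqrt (∑ i, u' i ^ 2) = 1 := by
        have hss : ∑ i, u' i ^ 2 = 1 := by
          simp only [hu', mul_pow, ← Finset.mul_sum, ← hcsq]
          field_simp
        rw [hss, Real.sqrt_one]
      have h2 : (∑ i, u' i) = 0 := by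
        simp only [hu', ← Finset.mul_sum, hu, mul_zero]
      have h3 := hmem u' h1 h2
      have h4 : ∀ e, (∑ v, M e v * u' v) = c⁻¹ * ∑ v, M e v * u v := by
        intro e; rw [Finset.mul_sum]; exact Finset.sum_congr rfl fun v _ => by ring
      have h5 : Real.sqrt (∑ e, (∑ v, M e v * u' v) ^ 2)
          = c⁻¹ * Real.sqrt (∑ e, (∑ v, M e v * u v) ^ 2) := by
        simp only [h4, mul_pow, ← Finset.mul_sum]
        rw [Real.sqrt_mul (by positivity), Real.sqrt_sq (by positivity)]
      rw [h5] at h3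
      calc Real.sqrt (∑ e, (∑ v, M e v * u v) ^ 2)
          = c * (c⁻¹ * Real.sqrt (∑ e, (∑ v, M e v * u v) ^ 2)) := by
            field_simp
        _ ≤ c * K := mul_le_mul_of_nonneg_left h3 hc0.le
        _ = K * c := mul_comm _ _
  -- main estimate
  have key : ∀ u : Fin n → ℝ, Real.sqrt (∑ i, u i ^ 2) = 1 → (∑ i, u i) = 0 →
      Real.sqrt (∑ e, (∑ v, M e v * u v) ^ 2) ≤ B + 3 * ε * K := by
    intro u hu1 hu0
    have hu2 : ∑ i, u i ^ 2 = 1 := Real.sqrt_eq_one.mp hu1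
    set f : Fin n → ℝ := fun e => ∑ v, M e v * u v with hf
    have hFnn : (0:ℝ) ≤ Real.sqrt (∑ e, f e ^ 2) := Real.sqrt_nonneg _
    set F : ℝ := Real.sqrt (∑ e, f e ^ 2) with hF
    have hFK : F ≤ K := hmem u hu1 hu0
    have hεK : 0 ≤ 3 * ε * K := by positivity
    by_cases hF0 : ∑ e, f e ^ 2 = 0
    · have hFz : F = 0 := by rw [hF, hF0, Real.sqrt_zero]
      linarith
    · have hFpos : 0 < F := Real.sqrt_pos.mpr
        (lt_of_le_of_ne (Finset.sum_nonneg fun e _ => sq_nonneg _) (Ne.symm hF0))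
      have hF2 : F ^ 2 = ∑ e, f e ^ 2 :=
        Real.sq_sqrt (Finset.sum_nonneg fun e _ => sq_nonneg _)
      set w : Fin n → ℝ := fun e => F⁻¹ * f e with hw
      have hwsum : ∑ e, w e ^ 2 = 1 := by
        simp only [hw, mul_pow, ← Finset.mul_sum, ← hF2]
        field_simp
      obtain ⟨y, hy_lat, hy_ball, hy_close⟩ := round_ball hn hε w hwsum.le
      set z' : Fin n → ℝ := fun i => (1 - ε) * u i with hz'
      have hz'0 : (∑ i, z' i) = 0 := by
        simp only [hz', ← Finset.mul_sum, hu0, mul_zero]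
      obtain ⟨x, hx_lat, hx0, hx_close⟩ := round_zero hn hε z' hz'0
      -- norms
      have hEz' : ‖EV z'‖ = 1 - ε := by
        rw [EV_norm]
        have hss : ∑ i, z' i ^ 2 = (1 - ε) ^ 2 := by
          simp only [hz', mul_pow, ← Finset.mul_sum, hu2, mul_one]
        rw [hss, Real.sqrt_sq (by linarith)]
      have hz'x : ‖EV z' - EV x‖ ≤ ε := by
        rw [← EV_sub, EV_norm]
        refine sqrt_le hε.le ?_
        refine le_trans (le_of_eq ?_) hx_close
        exact Finset.sum_congr rfl fun i _ => by simp [Pi.sub_apply]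
      have huz' : ‖EV u - EV z'‖ = ε := by
        rw [← EV_sub, EV_norm]
        have hss : ∑ i, (u - z') i ^ 2 = ε ^ 2 := by
          have : ∀ i, (u - z') i = ε * u i := fun i => by
            simp only [Pi.sub_apply, hz']; ring
          simp only [this, mul_pow, ← Finset.mul_sum, hu2, mul_one]
        rw [hss, Real.sqrt_sq hε.le]
      have hux : ‖EV u - EV x‖ ≤ 2 * ε := by
        calc ‖EV u - EV x‖ ≤ ‖EV u - EV z'‖ + ‖EV z' - EV x‖ :=
              norm_sub_le_norm_sub_add_norm_sub _ _ _
          _ ≤ ε + ε := by rw [huz']; linarith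
          _ = 2 * ε := by ring
      have hxnorm : Real.sqrt (∑ i, x i ^ 2) ≤ 1 := by
        rw [← EV_norm]
        calc ‖EV x‖ = ‖EV z' - (EV z' - EV x)‖ := by rw [sub_sub_cancel]
          _ ≤ ‖EV z'‖ + ‖EV z' - EV x‖ := norm_sub_le _ _
          _ ≤ (1 - ε) + ε := by rw [hEz']; linarith
          _ = 1 := by ring
      have hynorm : Real.sqrt (∑ i, y i ^ 2) ≤ 1 := by
        calc Real.sqrt (∑ i, y i ^ 2) ≤ Real.sqrt 1 := Real.sqrt_le_sqrt hy_ball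
          _ = 1 := Real.sqrt_one
      have hwy : ‖EV w - EV y‖ ≤ ε := by
        rw [← EV_sub, EV_norm]
        refine sqrt_le hε.le ?_
        refine le_trans (le_of_eq ?_) hy_close
        exact Finset.sum_congr rfl fun i _ => by simp [Pi.sub_apply]
      -- the decomposition
      have hwf : ∑ e, w e * f e = F := by
        have hterm : ∀ e, w e * f e = F⁻¹ * f e ^ 2 := fun e => by
          simp only [hw]; ring
        rw [Finset.sum_congr rfl fun e _ => hterm e, ← Finset.mul_sum, ← hF2]
        field_simp
      have hdecomp : F = (∑ e, y e * (∑ v, M e v * x v)) + (∑ e, (w e - y e) * f e)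
          + (∑ e, y e * (f e - ∑ v, M e v * x v)) := by
        rw [← hwf, ← Finset.sum_add_distrib, ← Finset.sum_add_distrib]
        exact Finset.sum_congr rfl fun e _ => by ring
      -- bound the three pieces
      have hA1 : (∑ e, y e * (∑ v, M e v * x v)) ≤ B := by
        have hhh := h x y hx_lat hxnorm hx0 hy_lat hynorm
        have hrw : ∑ e, y e * (∑ v, M e v * x v) = ∑ e, ∑ v, y e * M e v * x v := by
          refine Finset.sum_congr rfl fun e _ => ?_
          rw [Finset.mul_sum]
          exact Finset.sum_congr rfl fun v _ => by ring
        rw [hrw]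
        exact le_of_abs_le hhh
      have hEf : ‖EV f‖ = F := by rw [EV_norm]
      have hA2 : (∑ e, (w e - y e) * f e) ≤ ε * K := by
        have hrw : ∑ e, (w e - y e) * f e = ⟪EV (w - y), EV f⟫ := by
          rw [EV_inner]
          exact Finset.sum_congr rfl fun e _ => by simp [Pi.sub_apply]
        rw [hrw]
        calc ⟪EV (w - y), EV f⟫ ≤ ‖EV (w - y)‖ * ‖EV f‖ := real_inner_le_norm _ _
          _ ≤ ε * K := by
              rw [EV_sub, hEf]
              exact mul_le_mul hwy hFK hFnn hε.le
      have hA3 : (∑ e, y e * (f e - ∑ v, M e v * x v)) ≤ 2 * ε * K := by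
        set d : Fin n → ℝ := fun i => u i - x i with hd
        have hg : ∀ e, f e - (∑ v, M e v * x v) = ∑ v, M e v * d v := by
          intro e
          simp only [hf, hd, ← Finset.sum_sub_distrib]
          exact Finset.sum_congr rfl fun v _ => by ring
        have hd0 : (∑ i, d i) = 0 := by
          simp only [hd, Finset.sum_sub_distrib, hu0, hx0, sub_zero]
        have hdnorm : Real.sqrt (∑ i, d i ^ 2) ≤ 2 * ε := by
          rw [← EV_norm]
          have : EV d = EV u - EV x := by
            rw [← EV_sub]; rfl
          rw [this]
          exact hux
        have hgnorm : Real.sqrt (∑ e, (∑ v, M e v * d v) ^ 2) ≤ K * (2 * ε) :=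
          le_trans (Klin d hd0) (mul_le_mul_of_nonneg_left hdnorm hK0)
        have hrw : ∑ e, y e * (f e - ∑ v, M e v * x v)
            = ⟪EV y, EV (fun e => ∑ v, M e v * d v)⟫ := by
          rw [EV_inner]
          exact Finset.sum_congr rfl fun e _ => by rw [hg e]
        rw [hrw]
        calc ⟪EV y, EV (fun e => ∑ v, M e v * d v)⟫
            ≤ ‖EV y‖ * ‖EV (fun e => ∑ v, M e v * d v)‖ := real_inner_le_norm _ _
          _ ≤ 1 * (K * (2 * ε)) := by
              refine mul_le_mul ?_ ?_ (norm_nonneg _) zero_le_one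
              · rw [EV_norm]; exact hynorm
              · rw [EV_norm]; exact hgnorm
          _ = 2 * ε * K := by ring
      have : F ≤ B + 3 * ε * K := by
        rw [hdecomp]; linarith
      exact this
  -- conclude
  have hsup : K ≤ B + 3 * ε * K := by
    refine csSup_le hSne fun s hs => ?_
    obtain ⟨u, h1, h2, rfl⟩ := hs
    exact key u h1 h2
  have h13 : 0 < 1 - 3 * ε := by linarith
  have hKle : K ≤ (1 - 3 * ε)⁻¹ * B := by
    rw [inv_mul_eq_div, le_div_iff₀ h13]
    nlinarith
  exact le_trans (hmem z hz1 hz0) hKle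
end

section
/- Consider the random t-regular hypergraph on n vertices and m = n edges, with t ≤ n/6 and n sufficiently large. Let A be a set of vertices, B a set of edges with |B| ≤ n/3, and J ⊆ A × B any set of vertex–edge pairs. Then the probability that the incidence pattern between A and B is exactly J — i.e., that for every (v, e) ∈ A × B, vertex v belongs to edge e if and only if (v, e) ∈ J — is at most (2t/n)^{|J|}. -/
/-!
The event forces every vertex `v` to choose all edges of `J_v = {e | (v, e) ∈ J}`. The vertices
choose independently, and a uniform `t`-subset of an `n`-set contains a fixed `k`-set with
probability `C(n-k, t-k) / C(n, t) = t(t-1)⋯(t-k+1) / n(n-1)⋯(n-k+1) ≤ (t/n)^k`. Multiplying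
over the vertices bounds the probability by `(t/n)^|J|`, for every `n`.
-/

open scoped Classical
open Finset

/-- Outcome space of the random `t`-regular hypergraph on `n` vertices and `m` edges:
each vertex independently chooses a uniformly random `t`-element subset of the edges. -/
abbrev RegOmega (n m t : ℕ) := Fin n → {s : Finset (Fin m) // s.card = t}

namespace Nat

theorem descFactorial_mul_pow_le_descFactorial_mul_pow {t n : ℕ} (h : t ≤ n) (k : ℕ) :
    t.descFactorial k * n ^ k ≤ n.descFactorial k * t ^ k := by
  induction k with
  | zero => simp
  | succ k ih =>
    have step : (t - k) * n ≤ (n - k) * t := by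
      rw [Nat.sub_mul, Nat.sub_mul, mul_comm n t]
      exact Nat.sub_le_sub_left (Nat.mul_le_mul_left k h) _
    calc t.descFactorial (k + 1) * n ^ (k + 1)
        = ((t - k) * n) * (t.descFactorial k * n ^ k) := by
          rw [descFactorial_succ, pow_succ]; ring
      _ ≤ ((n - k) * t) * (n.descFactorial k * t ^ k) := Nat.mul_le_mul step ih
      _ = n.descFactorial (k + 1) * t ^ (k + 1) := by
          rw [descFactorial_succ, pow_succ]; ring

theorem choose_mul_descFactorial {n t k : ℕ} (hkt : k ≤ t) :
    n.choose t * t.descFactorial k = n.descFactorial k * (n - k).choose (t - k) := by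
  rw [descFactorial_eq_factorial_mul_choose, descFactorial_eq_factorial_mul_choose,
    mul_left_comm, choose_mul hkt, mul_assoc]

theorem choose_sub_mul_pow_le {n t k : ℕ} (hkt : k ≤ t) (htn : t ≤ n) :
    (n - k).choose (t - k) * n ^ k ≤ n.choose t * t ^ k := by
  have hpos : 0 < n.descFactorial k := descFactorial_pos.mpr (hkt.trans htn)
  refine Nat.le_of_mul_le_mul_left ?_ hpos
  calc n.descFactorial k * ((n - k).choose (t - k) * n ^ k)
      = n.choose t * (t.descFactorial k * n ^ k) := by
        rw [← mul_assoc, ← choose_mul_descFactorial hkt, mul_assoc]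
    _ ≤ n.choose t * (n.descFactorial k * t ^ k) :=
        Nat.mul_le_mul_left _ (descFactorial_mul_pow_le_descFactorial_mul_pow htn k)
    _ = n.descFactorial k * (n.choose t * t ^ k) := by ring

end Nat

theorem Finset.sum_card_filter_prod_mk {α β : Type*} [Fintype α] [Fintype β] [DecidableEq α]
    [DecidableEq β] (J : Finset (α × β)) : ∑ a, #{b | (a, b) ∈ J} = #J := by
  simp only [card_filter]
  rw [← Fintype.sum_prod_type' (fun a b => if (a, b) ∈ J then 1 else 0), ← card_filter,
    filter_mem_eq_inter, univ_inter]

theorem card_filter_superset_le_choose {α : Type*} [Fintype α] (t : ℕ) (K : Finset α) :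
    #{s : {s : Finset α // #s = t} | K ⊆ s.1} ≤ (Fintype.card α - #K).choose (t - #K) := by
  calc #{s : {s : Finset α // #s = t} | K ⊆ s.1}
      ≤ #((univ \ K).powersetCard (t - #K)) := by
        refine card_le_card_of_injOn (fun s => s.1 \ K) (fun s hs => ?_) (fun s hs u hu hsu => ?_)
        · have hKs : K ⊆ s.1 := (mem_filter.mp hs).2
          rw [mem_coe, mem_powersetCard]
          exact ⟨sdiff_subset_sdiff (subset_univ _) le_rfl,
            by rw [card_sdiff_of_subset hKs, s.2]⟩
        · have hKs : K ⊆ s.1 := (mem_filter.mp hs).2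
          have hKu : K ⊆ u.1 := (mem_filter.mp hu).2
          exact Subtype.ext (by
            rw [← sdiff_union_of_subset hKs, ← sdiff_union_of_subset hKu]
            exact congrArg (· ∪ K) hsu)
    _ = (Fintype.card α - #K).choose (t - #K) := by
        rw [card_powersetCard, card_sdiff_of_subset (subset_univ _), card_univ]

theorem pr_nonneg {Ω : Type*} [Fintype Ω] (p : Ω → Prop) : 0 ≤ pr p := by
  unfold pr; positivity

theorem pr_mono_s16 {Ω : Type*} [Fintype Ω] {p q : Ω → Prop} (h : ∀ ω, p ω → q ω) :
    pr p ≤ pr q := by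
  unfold pr
  gcongr ?_ / _
  exact_mod_cast card_le_card (monotone_filter_right _ fun ω _ => h ω)

theorem pr_pi_forall {ι X : Type*} [Fintype ι] [DecidableEq ι] [Fintype X]
    (P : ι → X → Prop) : pr (fun ω : ι → X => ∀ i, P i (ω i)) = ∏ i, pr (P i) := by
  have hcard : #{ω : ι → X | ∀ i, P i (ω i)} = ∏ i, #{x : X | P i x} := by
    rw [← Fintype.card_subtype, Fintype.card_congr Equiv.subtypePiEquivPi, Fintype.card_pi]
    exact prod_congr rfl fun i _ => Fintype.card_subtype _
  rw [pr, filter_congr_decidable, hcard, Fintype.card_pi, Nat.cast_prod, Nat.cast_prod,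
    ← prod_div_distrib]
  rfl

theorem pr_superset_le_pow {α : Type*} [Fintype α] (t : ℕ) (K : Finset α) :
    pr (fun s : {s : Finset α // #s = t} => K ⊆ s.1) ≤ ((t : ℝ) / Fintype.card α) ^ #K := by
  rw [pr, filter_congr_decidable, Fintype.card_finset_len]
  rcases lt_or_ge (Fintype.card α) t with htn | htn
  · rw [Nat.choose_eq_zero_of_lt htn, Nat.cast_zero, div_zero]
    positivity
  rcases lt_or_ge t #K with hKt | hKt
  · have hempty : #{s : {s : Finset α // #s = t} | K ⊆ s.1} = 0 := by
      refine card_eq_zero.mpr (filter_eq_empty_iff.mpr fun s _ hKs => ?_)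
      have := card_le_card hKs
      rw [s.2] at this
      omega
    rw [hempty, Nat.cast_zero, zero_div]
    positivity
  have hchoose : (0 : ℝ) < (Fintype.card α).choose t := by exact_mod_cast Nat.choose_pos htn
  have hpow : (0 : ℝ) < (Fintype.card α : ℝ) ^ #K := by
    rcases (#K).eq_zero_or_pos with hK | hK
    · simp [hK]
    · exact pow_pos (by exact_mod_cast hK.trans_le (card_le_univ K)) _
  rw [div_pow, div_le_iff₀ hchoose, div_mul_eq_mul_div, le_div_iff₀ hpow, mul_comm (_ ^ _)]
  exact_mod_cast (Nat.mul_le_mul_right _ (card_filter_superset_le_choose t K)).trans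
    (Nat.choose_sub_mul_pow_le hKt htn)

theorem prob_fixed_incidence_pattern :
    ∃ N : ℕ, ∀ n : ℕ, N ≤ n → ∀ t : ℕ, 6 * t ≤ n →
      ∀ A B : Finset (Fin n), 3 * B.card ≤ n →
      ∀ J : Finset (Fin n × Fin n), J ⊆ A ×ˢ B →
        pr (fun ω : RegOmega n n t =>
            ∀ v ∈ A, ∀ e ∈ B, (e ∈ (ω v).1 ↔ (v, e) ∈ J)) ≤
          ((2 * t : ℝ) / n) ^ J.card := by
  refine ⟨0, fun n _ t _ A B _ J hJ => ?_⟩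
  let K : Fin n → Finset (Fin n) := fun v => {e | (v, e) ∈ J}
  calc pr (fun ω : RegOmega n n t => ∀ v ∈ A, ∀ e ∈ B, (e ∈ (ω v).1 ↔ (v, e) ∈ J))
      ≤ pr (fun ω : RegOmega n n t => ∀ v, K v ⊆ (ω v).1) := pr_mono_s16 fun ω hω v e he => by
        have hve := mem_product.mp (hJ (mem_filter.mp he).2)
        exact (hω v hve.1 e hve.2).2 (mem_filter.mp he).2
    _ = ∏ v, pr (fun s : {s : Finset (Fin n) // #s = t} => K v ⊆ s.1) :=
        pr_pi_forall fun v (s : {s : Finset (Fin n) // #s = t}) => K v ⊆ s.1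
    _ ≤ ∏ v, ((t : ℝ) / n) ^ #(K v) :=
        prod_le_prod (fun v _ => pr_nonneg _) fun v _ => by
          simpa only [Fintype.card_fin] using pr_superset_le_pow t (K v)
    _ = ((t : ℝ) / n) ^ #J := by
        rw [prod_pow_eq_pow_sum, sum_card_filter_prod_mk J]
    _ ≤ ((2 * t : ℝ) / n) ^ #J := by gcongr; linarith [(t.cast_nonneg : (0 : ℝ) ≤ t)]
end

section
/- Let t > 0 and let x, y ∈ ℝ^n satisfy ‖x‖ ≤ 1, ‖y‖ ≤ 1 and ∑_i x_i = 0. Let L = { (u, v) ∈ {1,…,n}² : |x_u · y_v| ≥ √t / n }. Then | ∑_{(u,v) ∉ L} x_u · y_v | ≤ n/√t, and equally | ∑_{(u,v) ∈ L} x_u · y_v | ≤ n/√t. -/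
open scoped Classical
open Finset

theorem small_large_pairs_sum (n : ℕ) (t : ℝ) (ht : 0 < t) (x y : Fin n → ℝ)
    (hx : Real.sqrt (∑ i, x i ^ 2) ≤ 1) (hy : Real.sqrt (∑ i, y i ^ 2) ≤ 1)
    (hx0 : (∑ i, x i) = 0) :
    |∑ p ∈ Finset.univ.filter
        (fun p : Fin n × Fin n => ¬ (Real.sqrt t / n ≤ |x p.1 * y p.2|)),
        x p.1 * y p.2| ≤ (n : ℝ) / Real.sqrt t ∧
    |∑ p ∈ Finset.univ.filter
        (fun p : Fin n × Fin n => Real.sqrt t / n ≤ |x p.1 * y p.2|),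
        x p.1 * y p.2| ≤ (n : ℝ) / Real.sqrt t := by
  have hst : 0 < Real.sqrt t := Real.sqrt_pos.mpr ht
  rcases Nat.eq_zero_or_pos n with hn | hn
  · subst hn
    simp [Finset.filter_eq_empty_iff, le_div_iff₀ hst]
  have hn' : (0 : ℝ) < n := by exact_mod_cast hn
  have hx2 : (∑ i, x i ^ 2) ≤ 1 := by
    have h0 : (0:ℝ) ≤ ∑ i, x i ^ 2 := Finset.sum_nonneg fun i _ => sq_nonneg _
    nlinarith [Real.sq_sqrt h0, Real.sqrt_nonneg (∑ i, x i ^ 2)]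
  have hy2 : (∑ i, y i ^ 2) ≤ 1 := by
    have h0 : (0:ℝ) ≤ ∑ i, y i ^ 2 := Finset.sum_nonneg fun i _ => sq_nonneg _
    nlinarith [Real.sq_sqrt h0, Real.sqrt_nonneg (∑ i, y i ^ 2)]
  set S := Finset.univ.filter
      (fun p : Fin n × Fin n => Real.sqrt t / n ≤ |x p.1 * y p.2|) with hS
  have hlarge : |∑ p ∈ S, x p.1 * y p.2| ≤ (n : ℝ) / Real.sqrt t := by
    calc |∑ p ∈ S, x p.1 * y p.2|
        ≤ ∑ p ∈ S, |x p.1 * y p.2| := Finset.abs_sum_le_sum_abs _ _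
      _ ≤ ∑ p ∈ S, (n / Real.sqrt t) * (x p.1 * y p.2) ^ 2 := by
          refine Finset.sum_le_sum fun p hp => ?_
          have hp' := (Finset.mem_filter.mp hp).2
          have h1 : Real.sqrt t ≤ n * |x p.1 * y p.2| := by
            rw [div_le_iff₀ hn'] at hp'; linarith
          have h2 : |x p.1 * y p.2| * Real.sqrt t ≤ n * (x p.1 * y p.2) ^ 2 := by
            nlinarith [abs_nonneg (x p.1 * y p.2), sq_abs (x p.1 * y p.2)]
          rw [div_mul_eq_mul_div, le_div_iff₀ hst]
          linarith
      _ ≤ ∑ p : Fin n × Fin n, (n / Real.sqrt t) * (x p.1 * y p.2) ^ 2 := by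
          refine Finset.sum_le_sum_of_subset_of_nonneg (Finset.filter_subset _ _)
            fun p _ _ => by positivity
      _ = (n / Real.sqrt t) * ((∑ i, x i ^ 2) * (∑ i, y i ^ 2)) := by
          rw [← Finset.mul_sum, ← Finset.univ_product_univ, Finset.sum_product]
          simp_rw [mul_pow]
          rw [← Finset.sum_mul_sum]
      _ ≤ (n / Real.sqrt t) * 1 := by
          have h0 : (0:ℝ) ≤ ∑ i, y i ^ 2 := Finset.sum_nonneg fun i _ => sq_nonneg _
          have h0x : (0:ℝ) ≤ ∑ i, x i ^ 2 := Finset.sum_nonneg fun i _ => sq_nonneg _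
          have hd : (0:ℝ) ≤ n / Real.sqrt t := by positivity
          have h1 : (∑ i, x i ^ 2) * (∑ i, y i ^ 2) ≤ 1 := by nlinarith
          exact mul_le_mul_of_nonneg_left h1 hd
      _ = (n : ℝ) / Real.sqrt t := mul_one _
  refine ⟨?_, hlarge⟩
  have htot : (∑ p : Fin n × Fin n, x p.1 * y p.2) = 0 := by
    rw [← Finset.univ_product_univ, Finset.sum_product]
    rw [← Finset.sum_mul_sum, hx0, zero_mul]
  have hsplit : (∑ p ∈ Finset.univ.filter
        (fun p : Fin n × Fin n => ¬ (Real.sqrt t / n ≤ |x p.1 * y p.2|)),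
        x p.1 * y p.2) = - ∑ p ∈ S, x p.1 * y p.2 := by
    have := Finset.sum_filter_add_sum_filter_not Finset.univ
      (fun p : Fin n × Fin n => Real.sqrt t / n ≤ |x p.1 * y p.2|)
      (fun p => x p.1 * y p.2)
    rw [htot] at this
    rw [hS]
    linarith
  rw [hsplit, abs_neg]
  exact hlarge
end
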